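/- arXiv:2308.01504 — 2 statements merged into one kernel-verified Lean document; each statement's English description precedes it below -/
import Mathlib

section
/- There is an absolute constant c > 0 with the following property. Let G₀ = 𝔽_q² ⋊ SO₂(𝔽_q), let ρ₀, ρ₁, …, ρ_{q−ε_q−1} denote the q − ε_q one-dimensional irreducible complex representations of G₀ (those trivial on 𝔽_q²×{1}), let X ⊆ G₀ be nonempty, let M > 0, and let 1 ≤ k ≤ q − ε_q be an integer such that |1̂_X(ρ_r)| ≤ M for all but at most k indices r ∈ {0,1,…,q−ε_q−1}. Then |XX| ≥ c·min{ q³/k , |X|⁴/(q^{10}M⁴) , |X|²/q² }. -/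
open Matrix

/-- The special orthogonal group `SO₂` over a field `F`, i.e. the rotation matrices
`!![a, -b; b, a]` with `a² + b² = 1`, as a subgroup of the units of `2×2` matrices. -/
def SO2 (F : Type) [Field F] : Subgroup (Matrix (Fin 2) (Fin 2) F)ˣ where
  carrier := {h | ∃ a b : F, a ^ 2 + b ^ 2 = 1 ∧
    (h : Matrix (Fin 2) (Fin 2) F) = !![a, -b; b, a]}
  one_mem' := ⟨1, 0, by ring, by simp [Matrix.one_fin_two]⟩
  mul_mem' := by
    rintro x y ⟨a, b, hab, hx⟩ ⟨c, d, hcd, hy⟩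
    refine ⟨a * c - b * d, a * d + b * c, ?_, ?_⟩
    · have h : (a * c - b * d) ^ 2 + (a * d + b * c) ^ 2
        = (a ^ 2 + b ^ 2) * (c ^ 2 + d ^ 2) := by ring
      rw [h, hab, hcd, one_mul]
    · rw [Units.val_mul, hx, hy, Matrix.mul_fin_two]
      congr 1 <;> ring
  inv_mem' := by
    rintro x ⟨a, b, hab, hx⟩
    refine ⟨a, -b, by rw [neg_sq]; exact hab, ?_⟩
    have hmul : (x : Matrix (Fin 2) (Fin 2) F) * !![a, - -b; -b, a] = 1 := by
      rw [hx]
      ext i j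
      fin_cases i <;> fin_cases j <;>
        simp [Matrix.mul_apply, Fin.sum_univ_two, Matrix.one_apply] <;>
        (first
          | ring1
          | linear_combination hab
          | linear_combination -hab)
    calc (↑x⁻¹ : Matrix (Fin 2) (Fin 2) F)
        = ↑x⁻¹ * ((x : Matrix (Fin 2) (Fin 2) F) * !![a, - -b; -b, a]) := by
          rw [hmul, mul_one]
      _ = (↑x⁻¹ * (x : Matrix (Fin 2) (Fin 2) F)) * !![a, - -b; -b, a] := by
          rw [mul_assoc]
      _ = !![a, - -b; -b, a] := by rw [Units.inv_mul, one_mul]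

/-- The matrix of an element of `SO₂`. -/
def SO2.mat {F : Type} [Field F] (h : SO2 F) : Matrix (Fin 2) (Fin 2) F :=
  ((h : (Matrix (Fin 2) (Fin 2) F)ˣ) : Matrix (Fin 2) (Fin 2) F)

lemma SO2.mat_inv_mul {F : Type} [Field F] (h : SO2 F) : SO2.mat h⁻¹ * SO2.mat h = 1 := by
  simp only [SO2.mat, InvMemClass.coe_inv, Units.inv_mul]

lemma SO2.mat_mul_inv {F : Type} [Field F] (h : SO2 F) : SO2.mat h * SO2.mat h⁻¹ = 1 := by
  simp only [SO2.mat, InvMemClass.coe_inv, Units.mul_inv]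

lemma SO2.mat_mul {F : Type} [Field F] (h₁ h₂ : SO2 F) :
    SO2.mat (h₁ * h₂) = SO2.mat h₁ * SO2.mat h₂ := by
  simp only [SO2.mat, MulMemClass.coe_mul, Units.val_mul]

lemma SO2.mat_one {F : Type} [Field F] : SO2.mat (1 : SO2 F) = 1 := by
  simp only [SO2.mat, OneMemClass.coe_one, Units.val_one]

/-- The action of `SO₂(F)` on `F²` by matrix-vector multiplication, as a homomorphism
into the automorphisms of the (multiplicative version of the) additive group `F²`. -/
def rotHom (F : Type) [Field F] : SO2 F →* MulAut (Multiplicative (Fin 2 → F)) where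
  toFun h :=
    { toFun := fun v => Multiplicative.ofAdd ((SO2.mat h).mulVec v.toAdd)
      invFun := fun v => Multiplicative.ofAdd ((SO2.mat h⁻¹).mulVec v.toAdd)
      left_inv := fun v => by
        simp only [toAdd_ofAdd, Matrix.mulVec_mulVec, SO2.mat_inv_mul,
          Matrix.one_mulVec, ofAdd_toAdd]
      right_inv := fun v => by
        simp only [toAdd_ofAdd, Matrix.mulVec_mulVec, SO2.mat_mul_inv,
          Matrix.one_mulVec, ofAdd_toAdd]
      map_mul' := fun u v => by
        simp only [toAdd_mul, Matrix.mulVec_add, ofAdd_add] }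
  map_one' := by
    ext v
    simp [SO2.mat_one, Matrix.one_mulVec]
  map_mul' h₁ h₂ := by
    ext v
    simp only [MulEquiv.coe_mk, Equiv.coe_fn_mk, MulAut.mul_apply, toAdd_ofAdd,
      Matrix.mulVec_mulVec, SO2.mat_mul]

/-- The group `G₀ = F² ⋊ SO₂(F)` of rigid motions of the plane `F²`. -/
abbrev G0 (F : Type) [Field F] : Type :=
  Multiplicative (Fin 2 → F) ⋊[rotHom F] SO2 F

instance {N H : Type*} [Group N] [Group H] {φ : H →* MulAut N} [Finite N] [Finite H] :
    Finite (N ⋊[φ] H) :=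
  Finite.of_injective (fun g => (g.left, g.right))
    (by rintro ⟨a, b⟩ ⟨c, d⟩ h
        simp only [Prod.mk.injEq] at h
        simp [h.1, h.2])

open scoped Pointwise

noncomputable instance (F : Type) [Field F] [Fintype F] : Fintype (G0 F) :=
  Fintype.ofFinite _

/-- The Fourier coefficient of `f : G₀ → ℂ` at a one-dimensional representation
`χ : G₀ →* ℂ`, namely `f̂(χ) = (1/|G₀|) ∑_{x ∈ G₀} f(x) χ(x)`. -/
noncomputable def fourierG0 {F : Type} [Field F] [Fintype F]
    (f : G0 F → ℂ) (χ : G0 F →* ℂ) : ℂ :=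
  (∑ x : G0 F, f x * χ x) / (Nat.card (G0 F) : ℂ)

section SO2Basics

variable {F : Type} [Field F]

lemma SO2.exists_rep (h : SO2 F) : ∃ a b : F, a ^ 2 + b ^ 2 = 1 ∧
    SO2.mat h = !![a, -b; b, a] := h.2

lemma SO2.ext_mat {h₁ h₂ : SO2 F} (h : SO2.mat h₁ = SO2.mat h₂) : h₁ = h₂ :=
  Subtype.ext (Units.ext h)

instance : CommGroup (SO2 F) :=
  { (inferInstance : Group (SO2 F)) with
    mul_comm := by
      intro x y
      obtain ⟨a, b, hab, hx⟩ := SO2.exists_rep x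
      obtain ⟨c, d, hcd, hy⟩ := SO2.exists_rep y
      apply SO2.ext_mat
      rw [SO2.mat_mul, SO2.mat_mul, hx, hy, Matrix.mul_fin_two, Matrix.mul_fin_two]
      congr 1 <;> ring }

lemma SO2.two_ne_zero' [Fintype F] (hq : Odd (Fintype.card F)) : (2 : F) ≠ 0 := by
  intro h2
  obtain ⟨m, hm⟩ := hq
  have := FiniteField.cast_card_eq_zero F
  rw [hm] at this
  push_cast at this
  rw [h2] at this
  simp at this

/-- If a rotation matrix fixes the additive character `Ψ ≠ 0`, it is the identity. -/
lemma SO2.eq_one_of_fix [Fintype F] (hq : Odd (Fintype.card F)) (ρ : SO2 F)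
    (Ψ : AddChar (Fin 2 → F) ℂ) (hΨ : Ψ ≠ 0)
    (hfix : ∀ z, Ψ ((SO2.mat ρ).mulVec z) = Ψ z) : ρ = 1 := by
  by_contra hρ
  obtain ⟨e, f, hef, hm⟩ := SO2.exists_rep ρ
  have he : e ≠ 1 := by
    intro h1
    subst h1
    have hf : f = 0 := by
      have : f ^ 2 = 0 := by linear_combination hef
      exact pow_eq_zero_iff (n := 2) (by norm_num) |>.mp this
    apply hρ
    apply SO2.ext_mat
    rw [hm, SO2.mat_one, Matrix.one_fin_two, hf]
    norm_num
  have hdet : (SO2.mat ρ - 1).det ≠ 0 := by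
    have hAeq : SO2.mat ρ - 1 = !![e - 1, -f; f, e - 1] := by
      rw [hm, Matrix.one_fin_two]
      ext i j
      fin_cases i <;> fin_cases j <;> simp
    rw [hAeq, Matrix.det_fin_two_of]
    have h2e : (e - 1) * (e - 1) - -f * f = 2 * (1 - e) := by linear_combination hef
    rw [h2e]
    exact mul_ne_zero (SO2.two_ne_zero' hq) (sub_ne_zero.mpr (Ne.symm he))
  have : Invertible (SO2.mat ρ - 1) := Matrix.invertibleOfIsUnitDet _ hdet.isUnit
  apply hΨ
  rw [AddChar.eq_zero_iff]
  intro w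
  obtain ⟨v, hv⟩ : ∃ v, (SO2.mat ρ - 1).mulVec v = w :=
    ⟨(⅟(SO2.mat ρ - 1)).mulVec w, by
      rw [Matrix.mulVec_mulVec, mul_invOf_self, Matrix.one_mulVec]⟩
  have hne : Ψ v ≠ 0 := (AddChar.val_isUnit Ψ _).ne_zero
  calc Ψ w = Ψ ((SO2.mat ρ - 1).mulVec v) := by rw [hv]
    _ = 1 := by
        rw [Matrix.sub_mulVec, Matrix.one_mulVec, AddChar.map_sub_eq_div,
          hfix, div_self hne]

end SO2Basics

noncomputable instance (F : Type) [Field F] [Fintype F] : Fintype (SO2 F) :=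
  Fintype.ofFinite _

section SO2Card

variable {F : Type} [Field F] [Fintype F] [DecidableEq F]

open Finset

/-- Bundle a point on the circle into `SO2`. -/
def SO2.rotEl (a b : F) (hab : a ^ 2 + b ^ 2 = 1) : SO2 F :=
  ⟨⟨!![a, -b; b, a], !![a, b; -b, a],
    by ext i j; fin_cases i <;> fin_cases j <;>
        simp [Matrix.mul_apply, Fin.sum_univ_two, Matrix.one_apply] <;>
        (first | ring1 | linear_combination hab | linear_combination -hab),
    by ext i j; fin_cases i <;> fin_cases j <;>
        simp [Matrix.mul_apply, Fin.sum_univ_two, Matrix.one_apply] <;>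
        (first | ring1 | linear_combination hab | linear_combination -hab)⟩,
   ⟨a, b, hab, rfl⟩⟩

lemma SO2.mat_rotEl (a b : F) (hab : a ^ 2 + b ^ 2 = 1) :
    SO2.mat (SO2.rotEl a b hab) = !![a, -b; b, a] := rfl

lemma SO2.card_le : Fintype.card (SO2 F) ≤ 2 * Fintype.card F := by
  classical
  set φ : SO2 F → F × F := fun h => (SO2.mat h 0 0, SO2.mat h 1 0) with hφ
  have hinj : Function.Injective φ := by
    intro h h' hh
    obtain ⟨a, b, hab, hm⟩ := SO2.exists_rep h
    obtain ⟨a', b', hab', hm'⟩ := SO2.exists_rep h'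
    apply SO2.ext_mat
    have e1 := congrArg Prod.fst hh
    have e2 := congrArg Prod.snd hh
    simp only [hφ, hm, hm'] at e1 e2
    have e1' : a = a' := by simpa using e1
    have e2' : b = b' := by simpa using e2
    rw [hm, hm', e1', e2']
  set T : Finset (F × F) := univ.filter (fun p => p.1 ^ 2 + p.2 ^ 2 = 1) with hT
  have himage : univ.image φ ⊆ T := by
    intro p hp
    obtain ⟨h, _, rfl⟩ := Finset.mem_image.mp hp
    obtain ⟨a, b, hab, hm⟩ := SO2.exists_rep h
    simp only [hT, Finset.mem_filter, Finset.mem_univ, true_and, hφ, hm]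
    simpa using hab
  have hTcard : T.card ≤ 2 * Fintype.card F := by
    rw [Finset.card_eq_sum_card_fiberwise (f := Prod.fst) (t := univ)
      (fun p _ => mem_univ _)]
    have hfib : ∀ a : F, (T.filter (fun p => p.1 = a)).card ≤ 2 := by
      intro a
      have h1 : (T.filter (fun p => p.1 = a)).card ≤
          ((Polynomial.nthRoots 2 (1 - a ^ 2)).toFinset).card := by
        apply Finset.card_le_card_of_injOn (fun p => p.2)
        · intro p hp
          rw [Finset.mem_coe, Finset.mem_filter, hT, Finset.mem_filter] at hp
          obtain ⟨⟨-, hcirc⟩, hfst⟩ := hp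
          rw [Finset.mem_coe, Multiset.mem_toFinset, Polynomial.mem_nthRoots (by norm_num)]
          beta_reduce
          rw [hfst] at hcirc
          linear_combination hcirc
        · intro p hp p' hp' hpp
          rw [Finset.mem_coe, Finset.mem_filter] at hp hp'
          ext
          · rw [hp.2, hp'.2]
          · exact hpp
      refine h1.trans ((Multiset.toFinset_card_le _).trans ?_)
      simpa using Polynomial.card_nthRoots 2 (1 - a ^ 2 : F)
    calc ∑ a : F, (T.filter (fun p => p.1 = a)).card ≤ ∑ _a : F, 2 :=
          Finset.sum_le_sum (fun a _ => hfib a)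
      _ = 2 * Fintype.card F := by simp [mul_comm]
  calc Fintype.card (SO2 F) = (univ.image φ).card := by
        rw [Finset.card_image_of_injective _ hinj, card_univ]
    _ ≤ T.card := Finset.card_le_card himage
    _ ≤ 2 * Fintype.card F := hTcard

lemma SO2.card_ge (hq : Odd (Fintype.card F)) :
    Fintype.card F ≤ 2 * Fintype.card (SO2 F) := by
  classical
  have h2 : (2 : F) ≠ 0 := SO2.two_ne_zero' hq
  have habt : ∀ t : F, (1 : F) + t ^ 2 ≠ 0 →
      ((1 - t ^ 2) / (1 + t ^ 2)) ^ 2 + (2 * t / (1 + t ^ 2)) ^ 2 = 1 := by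
    intro t ht
    field_simp
    ring
  set σ : F → SO2 F := fun t =>
    if ht : (1 : F) + t ^ 2 ≠ 0 then SO2.rotEl _ _ (habt t ht) else 1 with hσ
  set good : Finset F := univ.filter (fun t => (1 : F) + t ^ 2 ≠ 0) with hgood
  have hinj : Set.InjOn σ good := by
    intro t ht t' ht' hss
    rw [Finset.mem_coe, hgood, Finset.mem_filter] at ht
    rw [Finset.mem_coe, hgood, Finset.mem_filter] at ht'
    have h1 := ht.2; have h1' := ht'.2
    rw [hσ] at hss
    simp only [dif_pos h1, dif_pos h1'] at hss
    have hmm := congrArg SO2.mat hss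
    rw [SO2.mat_rotEl, SO2.mat_rotEl] at hmm
    have ha : (1 - t ^ 2) / (1 + t ^ 2) = (1 - t' ^ 2) / (1 + t' ^ 2) := by
      have := congrFun (congrFun hmm 0) 0; simpa using this
    have hb : 2 * t / (1 + t ^ 2) = 2 * t' / (1 + t' ^ 2) := by
      have := congrFun (congrFun hmm 1) 0; simpa using this
    rw [div_eq_div_iff h1 h1'] at ha hb
    have hsq : t ^ 2 = t' ^ 2 := by
      have h2' : (2 : F) * t ^ 2 = 2 * t' ^ 2 := by linear_combination -ha
      exact mul_left_cancel₀ h2 h2'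
    have hb2 : t * (1 + t' ^ 2) = t' * (1 + t ^ 2) :=
      mul_left_cancel₀ h2 (by linear_combination hb)
    have hlin : (t - t') * (1 + t ^ 2) = 0 := by
      linear_combination hb2 + t * hsq
    rcases mul_eq_zero.mp hlin with h | h
    · exact sub_eq_zero.mp h
    · exact absurd h h1
  have hgoodcard : Fintype.card F ≤ good.card + 2 := by
    have hbad : (univ.filter (fun t : F => ¬((1 : F) + t ^ 2 ≠ 0))).card ≤ 2 := by
      have h1 : (univ.filter (fun t : F => ¬((1 : F) + t ^ 2 ≠ 0))).card ≤
          ((Polynomial.nthRoots 2 (-1 : F)).toFinset).card := by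
        apply Finset.card_le_card_of_injOn (fun t => t)
        · intro t htm
          rw [Finset.mem_coe, Finset.mem_filter, not_not] at htm
          rw [Finset.mem_coe, Multiset.mem_toFinset, Polynomial.mem_nthRoots (by norm_num)]
          beta_reduce
          linear_combination htm.2
        · exact fun a _ b _ hh => hh
      refine h1.trans ((Multiset.toFinset_card_le _).trans ?_)
      simpa using Polynomial.card_nthRoots 2 (-1 : F)
    have hsplit := Finset.card_filter_add_card_filter_not
      (s := (univ : Finset F)) (p := fun t : F => (1 : F) + t ^ 2 ≠ 0)
    rw [← hgood] at hsplit
    rw [Finset.card_univ] at hsplit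
    omega
  have hgood_le : good.card ≤ Fintype.card (SO2 F) := by
    rw [← Finset.card_image_of_injOn hinj]
    exact (Finset.card_le_card (Finset.subset_univ _)).trans_eq card_univ
  have hH2 : 2 ≤ Fintype.card (SO2 F) := by
    rw [Nat.succ_le_iff, Fintype.one_lt_card_iff]
    refine ⟨SO2.rotEl (-1) 0 (by norm_num), 1, fun hc => ?_⟩
    have hmc := congrArg SO2.mat hc
    rw [SO2.mat_rotEl, SO2.mat_one] at hmc
    have h00 := congrFun (congrFun hmc 0) 0
    rw [Matrix.one_apply] at h00
    simp at h00
    exact h2 (by linear_combination -h00)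
  omega

end SO2Card

namespace PG

open Finset
open scoped Classical

noncomputable section

variable {F : Type} [Field F] [Fintype F]

/-- The element `(z, α)` of the rigid motion group. -/
def el (z : Fin 2 → F) (α : SO2 F) : G0 F := ⟨Multiplicative.ofAdd z, α⟩

lemma el_mul (z w : Fin 2 → F) (α β : SO2 F) :
    el z α * el w β = el (z + (SO2.mat α).mulVec w) (α * β) := rfl

lemma el_left (z : Fin 2 → F) (α : SO2 F) : (el z α).left = Multiplicative.ofAdd z := rfl
lemma el_right (z : Fin 2 → F) (α : SO2 F) : (el z α).right = α := rfl

lemma el_injective2 {z z' : Fin 2 → F} {α α' : SO2 F} (h : el z α = el z' α') :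
    z = z' ∧ α = α' := by
  constructor
  · have := congrArg SemidirectProduct.left h; exact this
  · exact congrArg SemidirectProduct.right h

lemma eq_el (g : G0 F) : g = el (Multiplicative.toAdd g.left) g.right := by
  cases g; rfl

/-- The dual group of `F²`. -/
abbrev Dual (F : Type) [Field F] := AddChar (Fin 2 → F) ℂ

/-- Action of a rotation on an additive character of `F²`. -/
def act (α : SO2 F) (Ψ : Dual F) : Dual F :=
  Ψ.compAddMonoidHom (Matrix.mulVecLin (SO2.mat α)).toAddMonoidHom

lemma act_apply (α : SO2 F) (Ψ : Dual F) (z : Fin 2 → F) :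
    act α Ψ z = Ψ ((SO2.mat α).mulVec z) := rfl

lemma act_zero (α : SO2 F) : act α (0 : Dual F) = 0 := by
  ext z; rfl

lemma act_injective (hq : Odd (Fintype.card F)) (Ψ : Dual F) (hΨ : Ψ ≠ 0) :
    Function.Injective (fun α : SO2 F => act α Ψ) := by
  intro α γ h
  have hpt : ∀ z, Ψ ((SO2.mat α).mulVec z) = Ψ ((SO2.mat γ).mulVec z) := by
    intro z
    have := congrArg (fun Φ : Dual F => Φ z) h
    simpa [act_apply] using this
  have hfix : ∀ w, Ψ ((SO2.mat (γ * α⁻¹)).mulVec w) = Ψ w := by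
    intro w
    have h1 := hpt ((SO2.mat α⁻¹).mulVec w)
    rw [Matrix.mulVec_mulVec, SO2.mat_mul_inv, Matrix.one_mulVec] at h1
    rw [SO2.mat_mul, ← Matrix.mulVec_mulVec]
    exact h1.symm
  have := SO2.eq_one_of_fix hq (γ * α⁻¹) Ψ hΨ hfix
  have := mul_inv_eq_one.mp this
  exact this.symm

/-- Kernel identity: summing all characters of `F²` at a point. -/
lemma sum_dual (u : Fin 2 → F) :
    ∑ Ψ : Dual F, Ψ u = if u = 0 then ((Fintype.card F : ℂ)) ^ 2 else 0 := by
  rw [AddChar.sum_apply_eq_ite u]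
  have : (Fintype.card (Fin 2 → F) : ℂ) = (Fintype.card F : ℂ) ^ 2 := by
    rw [Fintype.card_fun]
    push_cast
    simp
  split_ifs <;> simp [this]

/-- The character sum of a finite subset of the plane. -/
def SS (A : Finset (Fin 2 → F)) (Ψ : Dual F) : ℂ := ∑ z ∈ A, Ψ z

lemma SS_zero (A : Finset (Fin 2 → F)) : SS A (0 : Dual F) = A.card := by
  simp [SS]

lemma norm_SS_le (A : Finset (Fin 2 → F)) (Ψ : Dual F) : ‖SS A Ψ‖ ≤ A.card := by
  calc ‖SS A Ψ‖ ≤ ∑ z ∈ A, ‖Ψ z‖ := norm_sum_le _ _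
    _ = A.card := by simp [AddChar.norm_apply]

/-- Parseval identity for a subset of the plane. -/
lemma parseval (A : Finset (Fin 2 → F)) :
    ∑ Ψ : Dual F, ‖SS A Ψ‖ ^ 2 = (Fintype.card F : ℝ) ^ 2 * A.card := by
  have key : ∑ Ψ : Dual F, (SS A Ψ * (starRingEnd ℂ) (SS A Ψ))
      = ((Fintype.card F : ℂ)) ^ 2 * A.card := by
    have expand : ∀ Ψ : Dual F, SS A Ψ * (starRingEnd ℂ) (SS A Ψ)
        = ∑ z ∈ A, ∑ w ∈ A, Ψ (z - w) := by
      intro Ψ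
      rw [SS, map_sum, Finset.sum_mul_sum]
      refine Finset.sum_congr rfl fun z _ => Finset.sum_congr rfl fun w _ => ?_
      rw [← AddChar.map_neg_eq_conj, ← AddChar.map_add_eq_mul, sub_eq_add_neg]
    calc ∑ Ψ : Dual F, (SS A Ψ * (starRingEnd ℂ) (SS A Ψ))
        = ∑ Ψ : Dual F, ∑ z ∈ A, ∑ w ∈ A, Ψ (z - w) :=
          Finset.sum_congr rfl fun Ψ _ => expand Ψ
      _ = ∑ z ∈ A, ∑ w ∈ A, ∑ Ψ : Dual F, Ψ (z - w) := by
          rw [Finset.sum_comm]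
          exact Finset.sum_congr rfl fun z _ => Finset.sum_comm
      _ = ∑ z ∈ A, ∑ w ∈ A, (if z = w then ((Fintype.card F : ℂ)) ^ 2 else 0) := by
          refine Finset.sum_congr rfl fun z _ => Finset.sum_congr rfl fun w _ => ?_
          rw [sum_dual]
          simp [sub_eq_zero]
      _ = ∑ _z ∈ A, ((Fintype.card F : ℂ)) ^ 2 := by
          refine Finset.sum_congr rfl fun z hz => ?_
          rw [Finset.sum_ite_eq]
          simp [hz]
      _ = ((Fintype.card F : ℂ)) ^ 2 * A.card := by
          rw [Finset.sum_const, nsmul_eq_mul, mul_comm]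
  have cast : ((∑ Ψ : Dual F, ‖SS A Ψ‖ ^ 2 : ℝ) : ℂ)
      = ∑ Ψ : Dual F, (SS A Ψ * (starRingEnd ℂ) (SS A Ψ)) := by
    push_cast
    refine Finset.sum_congr rfl fun Ψ _ => ?_
    rw [Complex.mul_conj']
  rw [key] at cast
  exact_mod_cast cast

end

end PG

namespace PG

open Finset
open scoped Classical Pointwise

noncomputable section

variable {F : Type} [Field F] [Fintype F] (X : Set (G0 F))

/-- The fiber of `X` over a rotation `α`. -/
def Xf (α : SO2 F) : Finset (Fin 2 → F) := univ.filter (fun z => el z α ∈ X)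

lemma mem_Xf {α : SO2 F} {z : Fin 2 → F} : z ∈ Xf X α ↔ el z α ∈ X := by
  simp [Xf]

/-- Number of ways to write `(v, t)` as a product with first factor over `α`. -/
def pcnt (t α : SO2 F) (v : Fin 2 → F) : ℕ :=
  ((Xf X α ×ˢ Xf X (α⁻¹ * t)).filter
    (fun p => p.1 + (SO2.mat α).mulVec p.2 = v)).card

def rho (t : SO2 F) (v : Fin 2 → F) : ℕ := ∑ α, pcnt X t α v

/-- The multiplicative energy-like quantity. -/
def EE : ℕ := ∑ t : SO2 F, ∑ v : Fin 2 → F, (rho X t v) ^ 2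

def cardX : ℕ := ∑ α, (Xf X α).card

lemma sum_pcnt (t α : SO2 F) :
    ∑ v, pcnt X t α v = (Xf X α).card * (Xf X (α⁻¹ * t)).card := by
  rw [← Finset.card_product]
  rw [Finset.card_eq_sum_card_fiberwise
    (f := fun p => p.1 + (SO2.mat α).mulVec p.2) (t := univ) (fun p _ => mem_univ _)]
  rfl

lemma sum_rho (t : SO2 F) :
    ∑ v, (rho X t v) = ∑ α, (Xf X α).card * (Xf X (α⁻¹ * t)).card := by
  simp only [rho]
  rw [Finset.sum_comm]
  exact Finset.sum_congr rfl fun α _ => sum_pcnt X t α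

lemma sum_sum_rho : ∑ t, ∑ v, rho X t v = cardX X ^ 2 := by
  calc ∑ t, ∑ v, rho X t v = ∑ t, ∑ α, (Xf X α).card * (Xf X (α⁻¹ * t)).card :=
      Finset.sum_congr rfl fun t _ => sum_rho X t
    _ = ∑ α, ∑ t, (Xf X α).card * (Xf X (α⁻¹ * t)).card := Finset.sum_comm
    _ = ∑ α, (Xf X α).card * cardX X := by
        refine Finset.sum_congr rfl fun α _ => ?_
        rw [← Finset.mul_sum]
        congr 1
        rw [cardX]
        exact (Fintype.sum_equiv (Equiv.mulLeft α) _ _ (fun β => by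
          simp [inv_mul_cancel_left])).symm
    _ = cardX X ^ 2 := by rw [← Finset.sum_mul, sq]; rfl

lemma cardX_eq : Nat.card ↥X = cardX X := by
  rw [Nat.card_eq_fintype_card, ← Set.toFinset_card]
  rw [Finset.card_eq_sum_card_fiberwise
    (f := fun g : G0 F => g.right) (t := univ) (fun g _ => mem_univ _)]
  refine Finset.sum_congr rfl fun α _ => ?_
  refine Finset.card_bij' (fun g _ => Multiplicative.toAdd g.left)
    (fun z _ => el z α) ?_ ?_ ?_ ?_
  · intro g hg
    rw [Finset.mem_filter] at hg
    rw [mem_Xf]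
    have : el (Multiplicative.toAdd g.left) α = g := by
      rw [← hg.2]; exact (eq_el g).symm
    rw [this]
    exact Set.mem_toFinset.mp hg.1
  · intro z hz
    rw [Finset.mem_filter]
    exact ⟨Set.mem_toFinset.mpr (mem_Xf X |>.mp hz), rfl⟩
  · intro g hg
    rw [Finset.mem_filter] at hg
    have h := eq_el g
    rw [hg.2] at h
    exact h.symm
  · intro z hz
    rfl

lemma rho_supp {t : SO2 F} {v : Fin 2 → F} (h : rho X t v ≠ 0) : el v t ∈ X * X := by
  obtain ⟨α, -, hα⟩ := Finset.exists_ne_zero_of_sum_ne_zero h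
  obtain ⟨p, hp⟩ := Finset.card_ne_zero.mp hα
  rw [Finset.mem_filter, Finset.mem_product] at hp
  obtain ⟨⟨ha, hb⟩, heq⟩ := hp
  have := Set.mul_mem_mul (mem_Xf X |>.mp ha) (mem_Xf X |>.mp hb)
  rw [el_mul, heq, mul_inv_cancel_left] at this
  exact this

set_option maxHeartbeats 1000000 in
lemma cs_ineq : (cardX X : ℝ) ^ 4 ≤ (Nat.card ↥(X * X) : ℝ) * (EE X : ℝ) := by
  set P : Finset (SO2 F × (Fin 2 → F)) :=
    univ.filter (fun p => rho X p.1 p.2 ≠ 0) with hP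
  have h1 : (cardX X : ℝ) ^ 2 = ∑ p ∈ P, (rho X p.1 p.2 : ℝ) := by
    have : ∑ p ∈ P, (rho X p.1 p.2 : ℝ)
        = ∑ p : SO2 F × (Fin 2 → F), (rho X p.1 p.2 : ℝ) := by
      rw [hP]
      refine Finset.sum_subset (Finset.filter_subset _ _) (fun p _ hp => ?_)
      rw [Finset.mem_filter, not_and, not_not] at hp
      rw [hp (mem_univ _)]
      norm_num
    rw [this, Fintype.sum_prod_type]
    calc ((cardX X : ℝ)) ^ 2 = ((cardX X ^ 2 : ℕ) : ℝ) := by push_cast; ring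
      _ = ((∑ t, ∑ v, rho X t v : ℕ) : ℝ) := by rw [sum_sum_rho]
      _ = ∑ t, ∑ v, (rho X t v : ℝ) := by push_cast; rfl
  have h2 : (∑ p ∈ P, (rho X p.1 p.2 : ℝ)) ^ 2
      ≤ P.card * ∑ p ∈ P, (rho X p.1 p.2 : ℝ) ^ 2 :=
    sq_sum_le_card_mul_sum_sq
  have h3 : ∑ p ∈ P, (rho X p.1 p.2 : ℝ) ^ 2 ≤ (EE X : ℝ) := by
    have : (EE X : ℝ) = ∑ p : SO2 F × (Fin 2 → F), (rho X p.1 p.2 : ℝ) ^ 2 := by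
      rw [EE]; push_cast; rw [Fintype.sum_prod_type]
    rw [this]
    refine Finset.sum_le_sum_of_subset_of_nonneg (Finset.subset_univ _)
      (fun p _ _ => by positivity)
  have h4 : (P.card : ℝ) ≤ (Nat.card ↥(X * X) : ℝ) := by
    have hinj : Set.InjOn (fun p : SO2 F × (Fin 2 → F) => el p.2 p.1) ↑P := by
      intro p _ p' _ hpp
      obtain ⟨h1', h2'⟩ := el_injective2 hpp
      exact Prod.ext h2' h1'
    have hsub : (fun p : SO2 F × (Fin 2 → F) => el p.2 p.1) '' ↑P ⊆ X * X := by
      rintro g ⟨p, hp, rfl⟩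
      rw [Finset.mem_coe, hP, Finset.mem_filter] at hp
      exact rho_supp X hp.2
    have : P.card ≤ Nat.card ↥(X * X) := by
      rw [Nat.card_coe_set_eq, ← Set.ncard_coe_finset,
        ← Set.ncard_image_of_injOn hinj]
      exact Set.ncard_le_ncard hsub (Set.toFinite _)
    exact_mod_cast this
  calc (cardX X : ℝ) ^ 4 = ((cardX X : ℝ) ^ 2) ^ 2 := by ring
    _ = (∑ p ∈ P, (rho X p.1 p.2 : ℝ)) ^ 2 := by rw [h1]
    _ ≤ P.card * ∑ p ∈ P, (rho X p.1 p.2 : ℝ) ^ 2 := h2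
    _ ≤ (Nat.card ↥(X * X) : ℝ) * (EE X : ℝ) := by
        exact mul_le_mul h4 h3 (Finset.sum_nonneg fun p _ => sq_nonneg _)
          (Nat.cast_nonneg _)

end

end PG

namespace PG

open Finset
open scoped Classical

noncomputable section

variable {F : Type} [Field F] [Fintype F] (X : Set (G0 F))

lemma swap_factor {σ τ κ : Type*} [Fintype κ] (s : Finset σ) (u : Finset τ)
    (Xc : σ → κ → ℂ) (Yc : τ → κ → ℂ) :
    ∑ p ∈ s, ∑ r ∈ u, ∑ v : κ, Xc p v * Yc r v
      = ∑ v : κ, (∑ p ∈ s, Xc p v) * (∑ r ∈ u, Yc r v) := by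
  calc ∑ p ∈ s, ∑ r ∈ u, ∑ v : κ, Xc p v * Yc r v
      = ∑ p ∈ s, ∑ v : κ, ∑ r ∈ u, Xc p v * Yc r v :=
        Finset.sum_congr rfl fun p _ => Finset.sum_comm
    _ = ∑ v : κ, ∑ p ∈ s, ∑ r ∈ u, Xc p v * Yc r v := Finset.sum_comm
    _ = ∑ v : κ, (∑ p ∈ s, Xc p v) * (∑ r ∈ u, Yc r v) := by
        refine Finset.sum_congr rfl fun v _ => ?_
        rw [Finset.sum_mul_sum]

/-- The `t`-component of the Fourier side. -/
def Vc (Ψ : Dual F) (t : SO2 F) : ℂ :=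
  ∑ α, SS (Xf X α) Ψ * SS (Xf X (α⁻¹ * t)) (act α Ψ)

lemma SS_pair (A B : Finset (Fin 2 → F)) (α : SO2 F) (Ψ : Dual F) :
    SS A Ψ * SS B (act α Ψ) = ∑ p ∈ A ×ˢ B, Ψ (p.1 + (SO2.mat α).mulVec p.2) := by
  rw [Finset.sum_product, SS, SS, Finset.sum_mul_sum]
  exact Finset.sum_congr rfl fun a _ => Finset.sum_congr rfl fun b _ =>
    (AddChar.map_add_eq_mul Ψ _ _).symm

lemma pcnt_cast (t α : SO2 F) (v : Fin 2 → F) :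
    (pcnt X t α v : ℂ) =
      ∑ p ∈ Xf X α ×ˢ Xf X (α⁻¹ * t),
        (if p.1 + (SO2.mat α).mulVec p.2 = v then (1 : ℂ) else 0) := by
  rw [pcnt, Finset.card_filter]
  push_cast
  rfl

/-- The key character-sum identity counting coincidences. -/
lemma char_count (t α γ : SO2 F) :
    ∑ Ψ : Dual F, (SS (Xf X α) Ψ * SS (Xf X (α⁻¹ * t)) (act α Ψ)) *
      (starRingEnd ℂ) (SS (Xf X γ) Ψ * SS (Xf X (γ⁻¹ * t)) (act γ Ψ))
    = (Fintype.card F : ℂ) ^ 2 *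
        ∑ v, (pcnt X t α v : ℂ) * (pcnt X t γ v : ℂ) := by
  have expand : ∀ Ψ : Dual F,
      (SS (Xf X α) Ψ * SS (Xf X (α⁻¹ * t)) (act α Ψ)) *
        (starRingEnd ℂ) (SS (Xf X γ) Ψ * SS (Xf X (γ⁻¹ * t)) (act γ Ψ))
      = ∑ p ∈ Xf X α ×ˢ Xf X (α⁻¹ * t), ∑ r ∈ Xf X γ ×ˢ Xf X (γ⁻¹ * t),
          Ψ ((p.1 + (SO2.mat α).mulVec p.2) - (r.1 + (SO2.mat γ).mulVec r.2)) := by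
    intro Ψ
    rw [SS_pair, SS_pair]
    have hconj : (starRingEnd ℂ) (∑ r ∈ Xf X γ ×ˢ Xf X (γ⁻¹ * t),
        Ψ (r.1 + (SO2.mat γ).mulVec r.2))
        = ∑ r ∈ Xf X γ ×ˢ Xf X (γ⁻¹ * t), Ψ (-(r.1 + (SO2.mat γ).mulVec r.2)) := by
      rw [map_sum]
      exact Finset.sum_congr rfl fun r _ => (AddChar.map_neg_eq_conj Ψ _).symm
    rw [hconj, Finset.sum_mul_sum]
    exact Finset.sum_congr rfl fun p _ => Finset.sum_congr rfl fun r _ => by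
      rw [← AddChar.map_add_eq_mul, ← sub_eq_add_neg]
  have hsplit : ∀ (p r : (Fin 2 → F) × (Fin 2 → F)),
      (if p.1 + (SO2.mat α).mulVec p.2 = r.1 + (SO2.mat γ).mulVec r.2
        then (1 : ℂ) else 0)
      = ∑ v, (if p.1 + (SO2.mat α).mulVec p.2 = v then (1 : ℂ) else 0) *
          (if r.1 + (SO2.mat γ).mulVec r.2 = v then (1 : ℂ) else 0) := by
    intro p r
    have h1 : ∑ v, (if p.1 + (SO2.mat α).mulVec p.2 = v then (1 : ℂ) else 0) *
        (if r.1 + (SO2.mat γ).mulVec r.2 = v then (1 : ℂ) else 0)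
        = if p.1 + (SO2.mat α).mulVec p.2 = r.1 + (SO2.mat γ).mulVec r.2
            then (1 : ℂ) else 0 := by
      simp only [boole_mul]
      rw [Finset.sum_ite_eq]
      simp only [Finset.mem_univ, if_true]
      exact if_congr eq_comm rfl rfl
    exact h1.symm
  calc ∑ Ψ : Dual F, (SS (Xf X α) Ψ * SS (Xf X (α⁻¹ * t)) (act α Ψ)) *
      (starRingEnd ℂ) (SS (Xf X γ) Ψ * SS (Xf X (γ⁻¹ * t)) (act γ Ψ))
      = ∑ Ψ : Dual F, ∑ p ∈ Xf X α ×ˢ Xf X (α⁻¹ * t),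
          ∑ r ∈ Xf X γ ×ˢ Xf X (γ⁻¹ * t),
          Ψ ((p.1 + (SO2.mat α).mulVec p.2) - (r.1 + (SO2.mat γ).mulVec r.2)) :=
        Finset.sum_congr rfl fun Ψ _ => expand Ψ
    _ = ∑ p ∈ Xf X α ×ˢ Xf X (α⁻¹ * t), ∑ r ∈ Xf X γ ×ˢ Xf X (γ⁻¹ * t),
          ∑ Ψ : Dual F,
          Ψ ((p.1 + (SO2.mat α).mulVec p.2) - (r.1 + (SO2.mat γ).mulVec r.2)) := by
        rw [Finset.sum_comm]
        exact Finset.sum_congr rfl fun p _ => Finset.sum_comm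
    _ = ∑ p ∈ Xf X α ×ˢ Xf X (α⁻¹ * t), ∑ r ∈ Xf X γ ×ˢ Xf X (γ⁻¹ * t),
          (if p.1 + (SO2.mat α).mulVec p.2 = r.1 + (SO2.mat γ).mulVec r.2
            then (Fintype.card F : ℂ) ^ 2 else 0) := by
        refine Finset.sum_congr rfl fun p _ => Finset.sum_congr rfl fun r _ => ?_
        rw [sum_dual]
        simp only [sub_eq_zero]
    _ = (Fintype.card F : ℂ) ^ 2 * ∑ p ∈ Xf X α ×ˢ Xf X (α⁻¹ * t),
          ∑ r ∈ Xf X γ ×ˢ Xf X (γ⁻¹ * t),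
          (if p.1 + (SO2.mat α).mulVec p.2 = r.1 + (SO2.mat γ).mulVec r.2
            then (1 : ℂ) else 0) := by
        rw [Finset.mul_sum]
        refine Finset.sum_congr rfl fun p _ => ?_
        rw [Finset.mul_sum]
        refine Finset.sum_congr rfl fun r _ => ?_
        rw [mul_ite, mul_one, mul_zero]
    _ = (Fintype.card F : ℂ) ^ 2 *
          ∑ v, (pcnt X t α v : ℂ) * (pcnt X t γ v : ℂ) := by
        congr 1
        calc ∑ p ∈ Xf X α ×ˢ Xf X (α⁻¹ * t), ∑ r ∈ Xf X γ ×ˢ Xf X (γ⁻¹ * t),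
            (if p.1 + (SO2.mat α).mulVec p.2 = r.1 + (SO2.mat γ).mulVec r.2
              then (1 : ℂ) else 0)
            = ∑ p ∈ Xf X α ×ˢ Xf X (α⁻¹ * t), ∑ r ∈ Xf X γ ×ˢ Xf X (γ⁻¹ * t),
              ∑ v, (if p.1 + (SO2.mat α).mulVec p.2 = v then (1 : ℂ) else 0) *
                (if r.1 + (SO2.mat γ).mulVec r.2 = v then (1 : ℂ) else 0) :=
              Finset.sum_congr rfl fun p _ => Finset.sum_congr rfl fun r _ =>
                hsplit p r
          _ = ∑ v, (∑ p ∈ Xf X α ×ˢ Xf X (α⁻¹ * t),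
                (if p.1 + (SO2.mat α).mulVec p.2 = v then (1 : ℂ) else 0)) *
                (∑ r ∈ Xf X γ ×ˢ Xf X (γ⁻¹ * t),
                (if r.1 + (SO2.mat γ).mulVec r.2 = v then (1 : ℂ) else 0)) :=
              swap_factor _ _ _ _
          _ = ∑ v, (pcnt X t α v : ℂ) * (pcnt X t γ v : ℂ) := by
              refine Finset.sum_congr rfl fun v _ => ?_
              rw [pcnt_cast, pcnt_cast]

/-- Master identity: `q² · E = ∑_Ψ ∑_t |V(Ψ,t)|²`. -/
lemma master :
    (Fintype.card F : ℝ) ^ 2 * (EE X : ℝ)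
      = ∑ Ψ : Dual F, ∑ t, ‖Vc X Ψ t‖ ^ 2 := by
  have hcomplex : ∑ Ψ : Dual F, ∑ t, Vc X Ψ t * (starRingEnd ℂ) (Vc X Ψ t)
      = (Fintype.card F : ℂ) ^ 2 * (EE X : ℂ) := by
    have hterm : ∀ (Ψ : Dual F) (t : SO2 F),
        Vc X Ψ t * (starRingEnd ℂ) (Vc X Ψ t)
        = ∑ α, ∑ γ, (SS (Xf X α) Ψ * SS (Xf X (α⁻¹ * t)) (act α Ψ)) *
            (starRingEnd ℂ) (SS (Xf X γ) Ψ * SS (Xf X (γ⁻¹ * t)) (act γ Ψ)) := by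
      intro Ψ t
      rw [Vc, map_sum, Finset.sum_mul_sum]
    calc ∑ Ψ : Dual F, ∑ t, Vc X Ψ t * (starRingEnd ℂ) (Vc X Ψ t)
        = ∑ Ψ : Dual F, ∑ t, ∑ α, ∑ γ,
            (SS (Xf X α) Ψ * SS (Xf X (α⁻¹ * t)) (act α Ψ)) *
            (starRingEnd ℂ) (SS (Xf X γ) Ψ * SS (Xf X (γ⁻¹ * t)) (act γ Ψ)) := by
          exact Finset.sum_congr rfl fun Ψ _ => Finset.sum_congr rfl fun t _ =>
            hterm Ψ t
      _ = ∑ t, ∑ α, ∑ γ, ∑ Ψ : Dual F,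
            (SS (Xf X α) Ψ * SS (Xf X (α⁻¹ * t)) (act α Ψ)) *
            (starRingEnd ℂ) (SS (Xf X γ) Ψ * SS (Xf X (γ⁻¹ * t)) (act γ Ψ)) := by
          rw [Finset.sum_comm]
          refine Finset.sum_congr rfl fun t _ => ?_
          rw [Finset.sum_comm]
          refine Finset.sum_congr rfl fun α _ => ?_
          rw [Finset.sum_comm]
      _ = ∑ t, ∑ α, ∑ γ, (Fintype.card F : ℂ) ^ 2 *
            ∑ v, (pcnt X t α v : ℂ) * (pcnt X t γ v : ℂ) := by
          exact Finset.sum_congr rfl fun t _ => Finset.sum_congr rfl fun α _ =>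
            Finset.sum_congr rfl fun γ _ => char_count X t α γ
      _ = ∑ t, ((Fintype.card F : ℂ) ^ 2 * ∑ v, ((rho X t v : ℂ)) ^ 2) := by
          refine Finset.sum_congr rfl fun t _ => ?_
          calc ∑ α, ∑ γ, ((Fintype.card F : ℂ) ^ 2 *
                ∑ v, (pcnt X t α v : ℂ) * (pcnt X t γ v : ℂ))
              = (Fintype.card F : ℂ) ^ 2 * ∑ α, ∑ γ,
                  ∑ v, (pcnt X t α v : ℂ) * (pcnt X t γ v : ℂ) := by
                rw [Finset.mul_sum]
                exact Finset.sum_congr rfl fun α _ => by rw [Finset.mul_sum]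
            _ = (Fintype.card F : ℂ) ^ 2 * ∑ v, (∑ α, (pcnt X t α v : ℂ)) *
                  (∑ γ, (pcnt X t γ v : ℂ)) := by rw [swap_factor]
            _ = (Fintype.card F : ℂ) ^ 2 * ∑ v, ((rho X t v : ℂ)) ^ 2 := by
                congr 1
                refine Finset.sum_congr rfl fun v _ => ?_
                have hr : (rho X t v : ℂ) = ∑ α, (pcnt X t α v : ℂ) := by
                  rw [rho]; push_cast; rfl
                rw [hr, sq]
      _ = (Fintype.card F : ℂ) ^ 2 * ∑ t, ∑ v, ((rho X t v : ℂ)) ^ 2 := by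
          rw [Finset.mul_sum]
      _ = (Fintype.card F : ℂ) ^ 2 * (EE X : ℂ) := by
          rw [EE]
          push_cast
          rfl
  have cast : ((∑ Ψ : Dual F, ∑ t, ‖Vc X Ψ t‖ ^ 2 : ℝ) : ℂ)
      = ∑ Ψ : Dual F, ∑ t, Vc X Ψ t * (starRingEnd ℂ) (Vc X Ψ t) := by
    push_cast
    refine Finset.sum_congr rfl fun Ψ _ => Finset.sum_congr rfl fun t _ => ?_
    rw [Complex.mul_conj']
  rw [hcomplex] at cast
  exact_mod_cast cast.symm

end

end PG

namespace PG

open Finset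
open scoped Classical

noncomputable section

variable {F : Type} [Field F] [Fintype F] (X : Set (G0 F))

lemma Vc_zero (t : SO2 F) :
    Vc X 0 t = ∑ α, ((Xf X α).card : ℂ) * ((Xf X (α⁻¹ * t)).card : ℂ) := by
  rw [Vc]
  exact Finset.sum_congr rfl fun α _ => by rw [act_zero, SS_zero, SS_zero]

lemma err_bound (hq : Odd (Fintype.card F)) :
    ∑ Ψ ∈ (univ : Finset (Dual F)).erase 0, ∑ t, ‖Vc X Ψ t‖ ^ 2
      ≤ ((Fintype.card F : ℝ) ^ 2 * (cardX X : ℝ)) ^ 2 := by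
  have key : ∀ Ψ : Dual F, Ψ ≠ 0 →
      ∑ t, ‖Vc X Ψ t‖ ^ 2 ≤ (∑ α, ‖SS (Xf X α) Ψ‖ ^ 2) *
        ((Fintype.card F : ℝ) ^ 2 * (cardX X : ℝ)) := by
    intro Ψ hΨ
    have hVt : ∀ t, ‖Vc X Ψ t‖ ^ 2 ≤ (∑ α, ‖SS (Xf X α) Ψ‖ ^ 2) *
        (∑ α, ‖SS (Xf X (α⁻¹ * t)) (act α Ψ)‖ ^ 2) := by
      intro t
      have h1 : ‖Vc X Ψ t‖ ≤ ∑ α, ‖SS (Xf X α) Ψ‖ * ‖SS (Xf X (α⁻¹ * t)) (act α Ψ)‖ := by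
        refine (norm_sum_le _ _).trans ?_
        exact Finset.sum_le_sum fun α _ => (norm_mul_le _ _)
      calc ‖Vc X Ψ t‖ ^ 2
          ≤ (∑ α, ‖SS (Xf X α) Ψ‖ * ‖SS (Xf X (α⁻¹ * t)) (act α Ψ)‖) ^ 2 := by
            exact pow_le_pow_left₀ (norm_nonneg _) h1 2
        _ ≤ (∑ α, ‖SS (Xf X α) Ψ‖ ^ 2) *
              (∑ α, ‖SS (Xf X (α⁻¹ * t)) (act α Ψ)‖ ^ 2) :=
            sum_mul_sq_le_sq_mul_sq _ _ _
    have hsum2 : ∑ t, ∑ α, ‖SS (Xf X (α⁻¹ * t)) (act α Ψ)‖ ^ 2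
        ≤ (Fintype.card F : ℝ) ^ 2 * (cardX X : ℝ) := by
      rw [Finset.sum_comm]
      have hper : ∀ α : SO2 F, ∑ t, ‖SS (Xf X (α⁻¹ * t)) (act α Ψ)‖ ^ 2
          = ∑ β, ‖SS (Xf X β) (act α Ψ)‖ ^ 2 :=
        fun α => (Fintype.sum_equiv (Equiv.mulLeft α) _ _
          (fun β => by simp [inv_mul_cancel_left])).symm
      calc ∑ α, ∑ t, ‖SS (Xf X (α⁻¹ * t)) (act α Ψ)‖ ^ 2
          = ∑ α, ∑ β, ‖SS (Xf X β) (act α Ψ)‖ ^ 2 :=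
            Finset.sum_congr rfl fun α _ => hper α
        _ = ∑ β, ∑ α, ‖SS (Xf X β) (act α Ψ)‖ ^ 2 := Finset.sum_comm
        _ ≤ ∑ β : SO2 F, (Fintype.card F : ℝ) ^ 2 * ((Xf X β).card : ℝ) := by
            refine Finset.sum_le_sum fun β _ => ?_
            have himg : ∑ Ψ' ∈ univ.image (fun α : SO2 F => act α Ψ),
                ‖SS (Xf X β) Ψ'‖ ^ 2 = ∑ α : SO2 F, ‖SS (Xf X β) (act α Ψ)‖ ^ 2 := by
              rw [Finset.sum_image (fun a _ b _ hab => act_injective hq Ψ hΨ hab)]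
            rw [← himg]
            calc ∑ Ψ' ∈ univ.image (fun α : SO2 F => act α Ψ), ‖SS (Xf X β) Ψ'‖ ^ 2
                ≤ ∑ Ψ' : Dual F, ‖SS (Xf X β) Ψ'‖ ^ 2 :=
                  Finset.sum_le_sum_of_subset_of_nonneg (Finset.subset_univ _)
                    (fun _ _ _ => sq_nonneg _)
              _ = (Fintype.card F : ℝ) ^ 2 * ((Xf X β).card : ℝ) := parseval _
        _ = (Fintype.card F : ℝ) ^ 2 * (cardX X : ℝ) := by
            rw [← Finset.mul_sum, cardX]
            push_cast
            rfl
    calc ∑ t, ‖Vc X Ψ t‖ ^ 2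
        ≤ ∑ t, (∑ α, ‖SS (Xf X α) Ψ‖ ^ 2) *
            (∑ α, ‖SS (Xf X (α⁻¹ * t)) (act α Ψ)‖ ^ 2) :=
          Finset.sum_le_sum fun t _ => hVt t
      _ = (∑ α, ‖SS (Xf X α) Ψ‖ ^ 2) *
            ∑ t, ∑ α, ‖SS (Xf X (α⁻¹ * t)) (act α Ψ)‖ ^ 2 := by
          rw [Finset.mul_sum]
      _ ≤ (∑ α, ‖SS (Xf X α) Ψ‖ ^ 2) *
            ((Fintype.card F : ℝ) ^ 2 * (cardX X : ℝ)) := by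
          refine mul_le_mul_of_nonneg_left hsum2 ?_
          exact Finset.sum_nonneg fun α _ => sq_nonneg _
  have hP1 : ∑ Ψ ∈ (univ : Finset (Dual F)).erase 0, ∑ α, ‖SS (Xf X α) Ψ‖ ^ 2
      ≤ (Fintype.card F : ℝ) ^ 2 * (cardX X : ℝ) := by
    calc ∑ Ψ ∈ (univ : Finset (Dual F)).erase 0, ∑ α, ‖SS (Xf X α) Ψ‖ ^ 2
        ≤ ∑ Ψ : Dual F, ∑ α, ‖SS (Xf X α) Ψ‖ ^ 2 :=
          Finset.sum_le_sum_of_subset_of_nonneg (Finset.subset_univ _)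
            (fun _ _ _ => Finset.sum_nonneg fun _ _ => sq_nonneg _)
      _ = ∑ α, ∑ Ψ : Dual F, ‖SS (Xf X α) Ψ‖ ^ 2 := Finset.sum_comm
      _ = ∑ α, (Fintype.card F : ℝ) ^ 2 * ((Xf X α).card : ℝ) :=
          Finset.sum_congr rfl fun α _ => parseval _
      _ = (Fintype.card F : ℝ) ^ 2 * (cardX X : ℝ) := by
          rw [← Finset.mul_sum, cardX]
          push_cast
          rfl
  calc ∑ Ψ ∈ (univ : Finset (Dual F)).erase 0, ∑ t, ‖Vc X Ψ t‖ ^ 2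
      ≤ ∑ Ψ ∈ (univ : Finset (Dual F)).erase 0, (∑ α, ‖SS (Xf X α) Ψ‖ ^ 2) *
          ((Fintype.card F : ℝ) ^ 2 * (cardX X : ℝ)) := by
        refine Finset.sum_le_sum fun Ψ hΨ => ?_
        exact key Ψ (Finset.ne_of_mem_erase hΨ)
    _ = (∑ Ψ ∈ (univ : Finset (Dual F)).erase 0, ∑ α, ‖SS (Xf X α) Ψ‖ ^ 2) *
          ((Fintype.card F : ℝ) ^ 2 * (cardX X : ℝ)) := by
        rw [Finset.sum_mul]
    _ ≤ ((Fintype.card F : ℝ) ^ 2 * (cardX X : ℝ)) *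
          ((Fintype.card F : ℝ) ^ 2 * (cardX X : ℝ)) := by
        refine mul_le_mul_of_nonneg_right hP1 (by positivity)
    _ = ((Fintype.card F : ℝ) ^ 2 * (cardX X : ℝ)) ^ 2 := by ring

end

end PG

namespace PG

open Finset
open scoped Classical

noncomputable section

variable {F : Type} [Field F] [Fintype F] (X : Set (G0 F))

/-- Fiber size as a function on the additivization of `SO2`. -/
def gH (s : Additive (SO2 F)) : ℂ := ((Xf X s.toMul).card : ℂ)

/-- Fourier transform of the fiber-size function on `SO2`. -/
def gHat (χ : AddChar (Additive (SO2 F)) ℂ) : ℂ := ∑ s, gH X s * χ s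

/-- Autocorrelation of the fiber-size function. -/
def RH (s : Additive (SO2 F)) : ℂ := ∑ a, gH X a * gH X (s - a)

lemma gHat_sq (χ : AddChar (Additive (SO2 F)) ℂ) :
    gHat X χ ^ 2 = ∑ s, RH X s * χ s := by
  rw [gHat, sq, Finset.sum_mul_sum]
  have hinner : ∀ a : Additive (SO2 F),
      ∑ b, (gH X a * χ a) * (gH X b * χ b)
        = ∑ s, gH X a * gH X (s - a) * χ s := by
    intro a
    refine Fintype.sum_equiv (Equiv.addLeft a) _ _ fun b => ?_
    simp only [Equiv.coe_addLeft, add_sub_cancel_left]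
    rw [AddChar.map_add_eq_mul]
    ring
  calc ∑ a, ∑ b, (gH X a * χ a) * (gH X b * χ b)
      = ∑ a, ∑ s, gH X a * gH X (s - a) * χ s :=
        Finset.sum_congr rfl fun a _ => hinner a
    _ = ∑ s, ∑ a, gH X a * gH X (s - a) * χ s := Finset.sum_comm
    _ = ∑ s, RH X s * χ s := by
        refine Finset.sum_congr rfl fun s _ => ?_
        rw [RH, Finset.sum_mul]

lemma sum_gHat4 :
    ∑ χ : AddChar (Additive (SO2 F)) ℂ, ‖gHat X χ‖ ^ 4
      = (Fintype.card (SO2 F) : ℝ) * ∑ s, ‖RH X s‖ ^ 2 := by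
  have hcomplex : ∑ χ : AddChar (Additive (SO2 F)) ℂ,
      (gHat X χ ^ 2) * (starRingEnd ℂ) (gHat X χ ^ 2)
      = (Fintype.card (SO2 F) : ℂ) * ∑ s, RH X s * (starRingEnd ℂ) (RH X s) := by
    have expand : ∀ χ : AddChar (Additive (SO2 F)) ℂ,
        (gHat X χ ^ 2) * (starRingEnd ℂ) (gHat X χ ^ 2)
        = ∑ s, ∑ s', (RH X s * (starRingEnd ℂ) (RH X s')) * χ (s - s') := by
      intro χ
      rw [gHat_sq, map_sum, Finset.sum_mul_sum]
      refine Finset.sum_congr rfl fun s _ => Finset.sum_congr rfl fun s' _ => ?_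
      rw [RingHom.map_mul]
      rw [← AddChar.map_neg_eq_conj, sub_eq_add_neg, AddChar.map_add_eq_mul]
      ring
    calc ∑ χ : AddChar (Additive (SO2 F)) ℂ,
        (gHat X χ ^ 2) * (starRingEnd ℂ) (gHat X χ ^ 2)
        = ∑ χ : AddChar (Additive (SO2 F)) ℂ, ∑ s, ∑ s',
            (RH X s * (starRingEnd ℂ) (RH X s')) * χ (s - s') :=
          Finset.sum_congr rfl fun χ _ => expand χ
      _ = ∑ s, ∑ s', ∑ χ : AddChar (Additive (SO2 F)) ℂ,
            (RH X s * (starRingEnd ℂ) (RH X s')) * χ (s - s') := by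
          rw [Finset.sum_comm]
          exact Finset.sum_congr rfl fun s _ => Finset.sum_comm
      _ = ∑ s, ∑ s', (RH X s * (starRingEnd ℂ) (RH X s')) *
            (if s - s' = 0 then (Fintype.card (Additive (SO2 F)) : ℂ) else 0) := by
          refine Finset.sum_congr rfl fun s _ => Finset.sum_congr rfl fun s' _ => ?_
          rw [← Finset.mul_sum, AddChar.sum_apply_eq_ite]
      _ = (Fintype.card (SO2 F) : ℂ) * ∑ s, RH X s * (starRingEnd ℂ) (RH X s) := by
          rw [Finset.mul_sum]
          refine Finset.sum_congr rfl fun s _ => ?_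
          rw [Finset.sum_eq_single s]
          · rw [sub_self, if_pos rfl]
            have hca : Fintype.card (Additive (SO2 F)) = Fintype.card (SO2 F) :=
              Fintype.card_congr Additive.toMul
            rw [hca]
            ring
          · intro s' _ hs'
            rw [if_neg (sub_ne_zero.mpr (Ne.symm hs')), mul_zero]
          · intro h
            exact absurd (mem_univ s) h
  have cast1 : ((∑ χ : AddChar (Additive (SO2 F)) ℂ, ‖gHat X χ‖ ^ 4 : ℝ) : ℂ)
      = ∑ χ : AddChar (Additive (SO2 F)) ℂ,
          (gHat X χ ^ 2) * (starRingEnd ℂ) (gHat X χ ^ 2) := by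
    push_cast
    refine Finset.sum_congr rfl fun χ _ => ?_
    rw [Complex.mul_conj', norm_pow]
    push_cast
    ring
  have cast2 : (((Fintype.card (SO2 F) : ℝ) * ∑ s, ‖RH X s‖ ^ 2 : ℝ) : ℂ)
      = (Fintype.card (SO2 F) : ℂ) * ∑ s, RH X s * (starRingEnd ℂ) (RH X s) := by
    push_cast
    congr 1
    refine Finset.sum_congr rfl fun s _ => ?_
    rw [Complex.mul_conj']
  have := cast1.trans (hcomplex.trans cast2.symm)
  exact_mod_cast this

lemma Vc_zero_eq_RH (t : SO2 F) : Vc X 0 t = RH X (Additive.ofMul t) := by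
  rw [Vc_zero, RH]
  refine Fintype.sum_equiv (Additive.ofMul) _ _ fun α => ?_
  have h1 : gH X (Additive.ofMul α) = ((Xf X α).card : ℂ) := rfl
  have h2 : gH X (Additive.ofMul t - Additive.ofMul α)
      = ((Xf X (α⁻¹ * t)).card : ℂ) := by
    have hmt : Additive.toMul (Additive.ofMul t - Additive.ofMul α) = α⁻¹ * t := by
      simp [toMul_sub, div_eq_mul_inv, mul_comm]
    rw [gH, hmt]
  rw [h1, h2]

lemma main_term_eq :
    (Fintype.card (SO2 F) : ℝ) * ∑ t, ‖Vc X 0 t‖ ^ 2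
      = ∑ χ : AddChar (Additive (SO2 F)) ℂ, ‖gHat X χ‖ ^ 4 := by
  rw [sum_gHat4]
  congr 1
  refine Fintype.sum_equiv (Additive.ofMul) _ _ fun t => ?_
  rw [Vc_zero_eq_RH]

end

end PG

namespace PG

open Finset
open scoped Classical

/-- Finiteness of the space of one-dimensional representations of a finite group. -/
instance finite_monoidHom_complex (G : Type) [Group G] [Finite G] :
    Finite (G →* ℂ) := by
  set N := Nat.card G with hN
  have hN0 : N ≠ 0 := Nat.card_pos.ne'
  have key : ∀ (χ : G →* ℂ) (g : G), χ g ∈ (Polynomial.nthRoots N (1 : ℂ)).toFinset := by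
    intro χ g
    rw [Multiset.mem_toFinset, Polynomial.mem_nthRoots (Nat.pos_of_ne_zero hN0)]
    rw [← map_pow, pow_card_eq_one']
    exact χ.map_one
  refine Finite.of_injective
    (fun χ : G →* ℂ => fun g : G =>
      (⟨χ g, key χ g⟩ : {z : ℂ // z ∈ (Polynomial.nthRoots N (1 : ℂ)).toFinset}))
    ?_
  intro χ χ' h
  ext g
  exact congrArg Subtype.val (congrFun h g)

noncomputable section

variable {F : Type} [Field F] [Fintype F]

/-- `SO2` into the multiplicativization of its additivization. -/
def toMA : SO2 F →* Multiplicative (Additive (SO2 F)) where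
  toFun h := Multiplicative.ofAdd (Additive.ofMul h)
  map_one' := rfl
  map_mul' _ _ := rfl

/-- Lift a character of `SO2` to a one-dimensional representation of `G₀`. -/
def liftCh (χ : AddChar (Additive (SO2 F)) ℂ) : G0 F →* ℂ :=
  χ.toMonoidHom.comp (toMA.comp (SemidirectProduct.rightHom))

lemma liftCh_el (χ : AddChar (Additive (SO2 F)) ℂ) (z : Fin 2 → F) (α : SO2 F) :
    liftCh χ (el z α) = χ (Additive.ofMul α) := rfl

lemma liftCh_inl (χ : AddChar (Additive (SO2 F)) ℂ) (z : Fin 2 → F) :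
    liftCh χ (SemidirectProduct.inl (Multiplicative.ofAdd z)) = 1 := by
  have : liftCh χ (SemidirectProduct.inl (Multiplicative.ofAdd z))
      = χ (Additive.ofMul (1 : SO2 F)) := by
    rw [liftCh]
    simp [SemidirectProduct.rightHom_inl, toMA]
  rw [this]
  exact AddChar.map_zero_eq_one χ

lemma liftCh_injective : Function.Injective (liftCh (F := F)) := by
  intro χ χ' h
  ext s
  have := congrArg (fun (f : G0 F →* ℂ) => f (el 0 (Additive.toMul s))) h
  simpa [liftCh_el] using this

/-- The plane-times-rotations parametrisation of `G₀`. -/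
def eqG : ((Fin 2 → F) × SO2 F) ≃ G0 F where
  toFun p := el p.1 p.2
  invFun g := (Multiplicative.toAdd g.left, g.right)
  left_inv p := rfl
  right_inv g := (eq_el g).symm

lemma card_G0 : Nat.card (G0 F) = Fintype.card F ^ 2 * Fintype.card (SO2 F) := by
  calc Nat.card (G0 F) = Nat.card ((Fin 2 → F) × SO2 F) :=
        (Nat.card_congr (eqG (F := F))).symm
    _ = Fintype.card F ^ 2 * Fintype.card (SO2 F) := by
        rw [Nat.card_prod, Nat.card_eq_fintype_card, Nat.card_eq_fintype_card,
          Fintype.card_fun, Fintype.card_fin]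

variable (X : Set (G0 F))

lemma fourier_eq (χ : AddChar (Additive (SO2 F)) ℂ) :
    fourierG0 (X.indicator 1) (liftCh χ)
      = gHat X χ / ((Fintype.card F : ℂ) ^ 2 * (Fintype.card (SO2 F) : ℂ)) := by
  rw [fourierG0]
  have hnum : ∑ x : G0 F, X.indicator 1 x * liftCh χ x = gHat X χ := by
    rw [← Equiv.sum_comp (eqG (F := F)) (fun x => X.indicator 1 x * liftCh χ x)]
    rw [Fintype.sum_prod_type]
    have hz : ∀ (z : Fin 2 → F) (α : SO2 F),
        X.indicator 1 (eqG (z, α)) * liftCh χ (eqG (z, α))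
        = (if el z α ∈ X then (1 : ℂ) else 0) * χ (Additive.ofMul α) := by
      intro z α
      have : eqG (z, α) = el z α := rfl
      rw [this, liftCh_el, Set.indicator_apply]
      simp only [Pi.one_apply]
    calc ∑ z : Fin 2 → F, ∑ α : SO2 F,
          X.indicator 1 (eqG (z, α)) * liftCh χ (eqG (z, α))
        = ∑ z : Fin 2 → F, ∑ α : SO2 F,
            (if el z α ∈ X then (1 : ℂ) else 0) * χ (Additive.ofMul α) :=
          Finset.sum_congr rfl fun z _ => Finset.sum_congr rfl fun α _ => hz z α
      _ = ∑ α : SO2 F, ∑ z : Fin 2 → F,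
            (if el z α ∈ X then (1 : ℂ) else 0) * χ (Additive.ofMul α) :=
          Finset.sum_comm
      _ = ∑ α : SO2 F, ((Xf X α).card : ℂ) * χ (Additive.ofMul α) := by
          refine Finset.sum_congr rfl fun α _ => ?_
          rw [← Finset.sum_mul]
          congr 1
          rw [Xf, Finset.card_filter]
          push_cast
          rfl
      _ = gHat X χ := by
          rw [gHat]
          exact (Fintype.sum_equiv (Additive.toMul)
            (fun s : Additive (SO2 F) => gH X s * χ s)
            (fun α : SO2 F => ((Xf X α).card : ℂ) * χ (Additive.ofMul α))
            (fun s => rfl)).symm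
  rw [hnum, card_G0]
  push_cast
  ring_nf

lemma norm_gHat_le (χ : AddChar (Additive (SO2 F)) ℂ) :
    ‖gHat X χ‖ ≤ (cardX X : ℝ) := by
  have hterm : ∀ s : Additive (SO2 F), ‖gH X s * χ s‖ = ((Xf X s.toMul).card : ℝ) := by
    intro s
    rw [norm_mul, AddChar.norm_apply, mul_one, gH]
    simp
  calc ‖gHat X χ‖ ≤ ∑ s, ‖gH X s * χ s‖ := norm_sum_le _ _
    _ = ∑ s : Additive (SO2 F), ((Xf X s.toMul).card : ℝ) :=
        Finset.sum_congr rfl fun s _ => hterm s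
    _ = ∑ α : SO2 F, ((Xf X α).card : ℝ) :=
        Fintype.sum_equiv Additive.toMul _ _ fun s => rfl
    _ = (cardX X : ℝ) := by rw [cardX]; push_cast; rfl

end

end PG

namespace PG

open Finset
open scoped Classical

noncomputable section

variable {F : Type} [Field F] [Fintype F] (X : Set (G0 F))

lemma bad_card (M : ℝ) (k : ℕ)
    (hcard : (Nat.card {χ : G0 F →* ℂ |
        (∀ z : Fin 2 → F, χ (SemidirectProduct.inl (Multiplicative.ofAdd z)) = 1) ∧
        M < ‖fourierG0 (X.indicator 1) χ‖} : ℤ) ≤ (k : ℤ)) :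
    ((univ : Finset (AddChar (Additive (SO2 F)) ℂ)).filter
      (fun χ => M < ‖fourierG0 (X.indicator 1) (liftCh χ)‖)).card ≤ k := by
  set S : Set (G0 F →* ℂ) := {χ : G0 F →* ℂ |
    (∀ z : Fin 2 → F, χ (SemidirectProduct.inl (Multiplicative.ofAdd z)) = 1) ∧
    M < ‖fourierG0 (X.indicator 1) χ‖} with hS
  set B : Finset (AddChar (Additive (SO2 F)) ℂ) :=
    (univ : Finset (AddChar (Additive (SO2 F)) ℂ)).filter
      (fun χ => M < ‖fourierG0 (X.indicator 1) (liftCh χ)‖) with hB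
  have hSfin : S.Finite := Set.toFinite S
  have hsub : ∀ χ ∈ B, liftCh χ ∈ S := by
    intro χ hχ
    rw [hB, Finset.mem_filter] at hχ
    exact ⟨fun z => liftCh_inl χ z, hχ.2⟩
  have h1 : B.card = (B.image liftCh).card :=
    (Finset.card_image_of_injective _ liftCh_injective).symm
  have h2 : (B.image liftCh).card ≤ hSfin.toFinset.card := by
    refine Finset.card_le_card fun χ' hχ' => ?_
    obtain ⟨χ, hχ, rfl⟩ := Finset.mem_image.mp hχ'
    exact hSfin.mem_toFinset.mpr (hsub χ hχ)
  have h3 : hSfin.toFinset.card = Nat.card ↥S := by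
    rw [Nat.card_coe_set_eq, Set.ncard_eq_toFinset_card _ hSfin]
  have h4 : Nat.card ↥S ≤ k := by exact_mod_cast hcard
  omega

lemma sum_gHat4_le (M : ℝ) (k : ℕ)
    (hbad : ((univ : Finset (AddChar (Additive (SO2 F)) ℂ)).filter
      (fun χ => M < ‖fourierG0 (X.indicator 1) (liftCh χ)‖)).card ≤ k) :
    ∑ χ : AddChar (Additive (SO2 F)) ℂ, ‖gHat X χ‖ ^ 4
      ≤ (k : ℝ) * (cardX X : ℝ) ^ 4 + (Fintype.card (SO2 F) : ℝ) *
          ((Fintype.card F : ℝ) ^ 2 * (Fintype.card (SO2 F) : ℝ) * M) ^ 4 := by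
  classical
  set p : AddChar (Additive (SO2 F)) ℂ → Prop :=
    fun χ => M < ‖fourierG0 (X.indicator 1) (liftCh χ)‖ with hp
  rw [← Finset.sum_filter_add_sum_filter_not univ p (fun χ => ‖gHat X χ‖ ^ 4)]
  have hB : ∑ χ ∈ univ.filter p, ‖gHat X χ‖ ^ 4 ≤ (k : ℝ) * (cardX X : ℝ) ^ 4 := by
    calc ∑ χ ∈ univ.filter p, ‖gHat X χ‖ ^ 4
        ≤ ∑ _χ ∈ univ.filter p, (cardX X : ℝ) ^ 4 :=
          Finset.sum_le_sum fun χ _ =>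
            pow_le_pow_left₀ (norm_nonneg _) (norm_gHat_le X χ) 4
      _ = ((univ.filter p).card : ℝ) * (cardX X : ℝ) ^ 4 := by
          rw [Finset.sum_const, nsmul_eq_mul]
      _ ≤ (k : ℝ) * (cardX X : ℝ) ^ 4 := by
          refine mul_le_mul_of_nonneg_right ?_ (by positivity)
          exact_mod_cast hbad
  have hG : ∑ χ ∈ univ.filter (fun χ => ¬ p χ), ‖gHat X χ‖ ^ 4
      ≤ (Fintype.card (SO2 F) : ℝ) *
          ((Fintype.card F : ℝ) ^ 2 * (Fintype.card (SO2 F) : ℝ) * M) ^ 4 := by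
    have hterm : ∀ χ ∈ univ.filter (fun χ => ¬ p χ),
        ‖gHat X χ‖ ^ 4 ≤ ((Fintype.card F : ℝ) ^ 2 * (Fintype.card (SO2 F) : ℝ) * M) ^ 4 := by
      intro χ hχ
      rw [Finset.mem_filter, hp, not_lt] at hχ
      have hf := hχ.2
      have hgh : ‖gHat X χ‖
          ≤ (Fintype.card F : ℝ) ^ 2 * (Fintype.card (SO2 F) : ℝ) * M := by
        have heq := fourier_eq X χ
        have hden : ((Fintype.card F : ℂ) ^ 2 * (Fintype.card (SO2 F) : ℂ)) ≠ 0 :=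
          mul_ne_zero (pow_ne_zero _ (Nat.cast_ne_zero.mpr Fintype.card_ne_zero))
            (Nat.cast_ne_zero.mpr Fintype.card_ne_zero)
        have hg : gHat X χ = fourierG0 (X.indicator 1) (liftCh χ) *
            ((Fintype.card F : ℂ) ^ 2 * (Fintype.card (SO2 F) : ℂ)) := by
          rw [heq, div_mul_cancel₀ _ hden]
        have hdnorm : ‖((Fintype.card F : ℂ) ^ 2 * (Fintype.card (SO2 F) : ℂ))‖
            = (Fintype.card F : ℝ) ^ 2 * (Fintype.card (SO2 F) : ℝ) := by
          rw [norm_mul, norm_pow, Complex.norm_natCast, Complex.norm_natCast]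
        rw [hg, norm_mul, hdnorm]
        calc ‖fourierG0 (X.indicator 1) (liftCh χ)‖ *
              ((Fintype.card F : ℝ) ^ 2 * (Fintype.card (SO2 F) : ℝ))
            ≤ M * ((Fintype.card F : ℝ) ^ 2 * (Fintype.card (SO2 F) : ℝ)) :=
              mul_le_mul_of_nonneg_right hf (by positivity)
          _ = (Fintype.card F : ℝ) ^ 2 * (Fintype.card (SO2 F) : ℝ) * M := by ring
      exact pow_le_pow_left₀ (norm_nonneg _) hgh 4
    calc ∑ χ ∈ univ.filter (fun χ => ¬ p χ), ‖gHat X χ‖ ^ 4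
        ≤ ∑ _χ ∈ univ.filter (fun χ => ¬ p χ),
            ((Fintype.card F : ℝ) ^ 2 * (Fintype.card (SO2 F) : ℝ) * M) ^ 4 :=
          Finset.sum_le_sum hterm
      _ = ((univ.filter (fun χ => ¬ p χ)).card : ℝ) *
            ((Fintype.card F : ℝ) ^ 2 * (Fintype.card (SO2 F) : ℝ) * M) ^ 4 := by
          rw [Finset.sum_const, nsmul_eq_mul]
      _ ≤ (Fintype.card (SO2 F) : ℝ) *
            ((Fintype.card F : ℝ) ^ 2 * (Fintype.card (SO2 F) : ℝ) * M) ^ 4 := by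
          refine mul_le_mul_of_nonneg_right ?_ (by positivity)
          have hle : (univ.filter (fun χ => ¬ p χ)).card
              ≤ Fintype.card (AddChar (Additive (SO2 F)) ℂ) :=
            (Finset.card_le_card (Finset.subset_univ _)).trans_eq (Finset.card_univ)
          have hcd : Fintype.card (AddChar (Additive (SO2 F)) ℂ)
              = Fintype.card (SO2 F) := by
            rw [AddChar.card_eq]
            exact Fintype.card_congr Additive.toMul
          rw [hcd] at hle
          exact_mod_cast hle
  linarith

end

end PG

namespace PG

open Finset
open scoped Classical Pointwise

noncomputable section

variable {F : Type} [Field F] [Fintype F] (X : Set (G0 F))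

lemma EE_bound (hq : Odd (Fintype.card F)) (M : ℝ) (k : ℕ)
    (hbad : ((univ : Finset (AddChar (Additive (SO2 F)) ℂ)).filter
      (fun χ => M < ‖fourierG0 (X.indicator 1) (liftCh χ)‖)).card ≤ k) :
    (Fintype.card (SO2 F) : ℝ) * ((Fintype.card F : ℝ) ^ 2 * (EE X : ℝ))
      ≤ (k : ℝ) * (cardX X : ℝ) ^ 4
        + (Fintype.card (SO2 F) : ℝ) *
            ((Fintype.card F : ℝ) ^ 2 * (Fintype.card (SO2 F) : ℝ) * M) ^ 4
        + (Fintype.card (SO2 F) : ℝ) *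
            ((Fintype.card F : ℝ) ^ 2 * (cardX X : ℝ)) ^ 2 := by
  have hsplit : (Fintype.card F : ℝ) ^ 2 * (EE X : ℝ)
      = (∑ t, ‖Vc X 0 t‖ ^ 2) + ∑ Ψ ∈ (univ : Finset (Dual F)).erase 0,
          ∑ t, ‖Vc X Ψ t‖ ^ 2 := by
    rw [master X]
    exact (Finset.add_sum_erase univ _ (mem_univ 0)).symm
  rw [hsplit, mul_add]
  have h1 : (Fintype.card (SO2 F) : ℝ) * ∑ t, ‖Vc X 0 t‖ ^ 2
      ≤ (k : ℝ) * (cardX X : ℝ) ^ 4 + (Fintype.card (SO2 F) : ℝ) *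
          ((Fintype.card F : ℝ) ^ 2 * (Fintype.card (SO2 F) : ℝ) * M) ^ 4 := by
    rw [main_term_eq X]
    exact sum_gHat4_le X M k hbad
  have h2 : (Fintype.card (SO2 F) : ℝ) * ∑ Ψ ∈ (univ : Finset (Dual F)).erase 0,
      ∑ t, ‖Vc X Ψ t‖ ^ 2
      ≤ (Fintype.card (SO2 F) : ℝ) * ((Fintype.card F : ℝ) ^ 2 * (cardX X : ℝ)) ^ 2 :=
    mul_le_mul_of_nonneg_left (err_bound X hq) (Nat.cast_nonneg _)
  linarith

end

end PG

/-- **Theorem 1.13.** There is an absolute constant `c > 0` such that: if `X ⊆ G₀` is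
nonempty and `|1̂_X(ρ_r)| ≤ M` for all but at most `k` of the one-dimensional irreducible
representations `ρ_r` of `G₀` (those trivial on `𝔽_q² × {1}`), where `1 ≤ k ≤ q - ε_q`,
then `|XX| ≥ c·min{ q³/k , |X|⁴/(q¹⁰M⁴) , |X|²/q² }`. -/
theorem product_growth_bias_G0 :
    ∃ c : ℝ, 0 < c ∧
      ∀ (F : Type) [Field F] [Fintype F] (q : ℕ), q = Fintype.card F → Odd q →
        ∀ ε : ℤ, ε = (if q % 4 = 1 then 1 else -1) →
        ∀ (X : Set (G0 F)), X.Nonempty →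
        ∀ M : ℝ, 0 < M →
        ∀ k : ℕ, 1 ≤ k → (k : ℤ) ≤ (q : ℤ) - ε →
        (Nat.card {χ : G0 F →* ℂ |
            (∀ z : Fin 2 → F, χ (SemidirectProduct.inl (Multiplicative.ofAdd z)) = 1) ∧
            M < ‖fourierG0 (X.indicator 1) χ‖} : ℤ) ≤ (k : ℤ) →
        c * min (min ((q : ℝ) ^ 3 / (k : ℝ))
              ((Nat.card X : ℝ) ^ 4 / ((q : ℝ) ^ 10 * M ^ 4)))
            ((Nat.card X : ℝ) ^ 2 / (q : ℝ) ^ 2) ≤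
          (Nat.card ↥(X * X) : ℝ) := by
  classical
  refine ⟨1 / 48, by norm_num, ?_⟩
  intro F _ _ q hqcard hqodd ε hε X hX M hM k hk1 hkq hcard
  subst hqcard
  subst hε
  -- notation
  set Q : ℝ := (Fintype.card F : ℝ) with hQdef
  set N : ℝ := (Fintype.card (SO2 F) : ℝ) with hNdef
  set C : ℝ := (PG.cardX X : ℝ) with hCdef
  set XX : ℝ := (Nat.card ↥(X * X) : ℝ) with hXXdef
  set E : ℝ := (PG.EE X : ℝ) with hEdef
  have hQpos : (0 : ℝ) < Q := by
    rw [hQdef]; exact_mod_cast Fintype.card_pos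
  have hNpos : (0 : ℝ) < N := by
    rw [hNdef]; exact_mod_cast Fintype.card_pos
  have hKpos : (0 : ℝ) < (k : ℝ) := by exact_mod_cast hk1
  have hq2n : Q ≤ 2 * N := by
    rw [hQdef, hNdef]
    exact_mod_cast SO2.card_ge hqodd
  have hn2q : N ≤ 2 * Q := by
    rw [hQdef, hNdef]
    exact_mod_cast SO2.card_le
  have hCX : (Nat.card ↥X : ℝ) = C := by
    rw [hCdef]
    exact_mod_cast PG.cardX_eq X
  have hC1 : (1 : ℝ) ≤ C := by
    rw [← hCX]
    have : Nonempty ↥X := hX.to_subtype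
    exact_mod_cast Nat.one_le_iff_ne_zero.mpr Nat.card_pos.ne'
  have hCpos : (0 : ℝ) < C := lt_of_lt_of_le one_pos hC1
  have hXXnn : (0 : ℝ) ≤ XX := by rw [hXXdef]; positivity
  have hEnn : (0 : ℝ) ≤ E := by rw [hEdef]; positivity
  -- the two main estimates
  have hbad := PG.bad_card X M k hcard
  have h_cs : C ^ 4 ≤ XX * E := PG.cs_ineq X
  have h_E : N * (Q ^ 2 * E) ≤ (k : ℝ) * C ^ 4 + N * (Q ^ 2 * N * M) ^ 4
      + N * (Q ^ 2 * C) ^ 2 := PG.EE_bound X hqodd M k hbad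
  -- arithmetic end-game
  rw [hCX]
  set m : ℝ := min (min (Q ^ 3 / (k : ℝ)) (C ^ 4 / (Q ^ 10 * M ^ 4))) (C ^ 2 / Q ^ 2)
    with hmdef
  have hm1 : m * (k : ℝ) ≤ Q ^ 3 := by
    have : m ≤ Q ^ 3 / (k : ℝ) := le_trans (min_le_left _ _) (min_le_left _ _)
    exact (le_div_iff₀ hKpos).mp this
  have hm2 : m * (Q ^ 10 * M ^ 4) ≤ C ^ 4 := by
    have : m ≤ C ^ 4 / (Q ^ 10 * M ^ 4) := le_trans (min_le_left _ _) (min_le_right _ _)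
    exact (le_div_iff₀ (by positivity)).mp this
  have hm3 : m * Q ^ 2 ≤ C ^ 2 := by
    have : m ≤ C ^ 2 / Q ^ 2 := min_le_right _ _
    exact (le_div_iff₀ (by positivity)).mp this
  set D : ℝ := (k : ℝ) * C ^ 4 + N * (Q ^ 2 * N * M) ^ 4 + N * (Q ^ 2 * C) ^ 2
    with hDdef
  have hDpos : (0 : ℝ) < D := by
    rw [hDdef]
    have h1 : (0:ℝ) < (k : ℝ) * C ^ 4 := by positivity
    have h2 : (0:ℝ) ≤ N * (Q ^ 2 * N * M) ^ 4 := by positivity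
    have h3 : (0:ℝ) ≤ N * (Q ^ 2 * C) ^ 2 := by positivity
    linarith
  have step1 : N * Q ^ 2 * C ^ 4 ≤ XX * D := by
    calc N * Q ^ 2 * C ^ 4 ≤ N * Q ^ 2 * (XX * E) := by
          refine mul_le_mul_of_nonneg_left h_cs (by positivity)
      _ = XX * (N * (Q ^ 2 * E)) := by ring
      _ ≤ XX * D := mul_le_mul_of_nonneg_left h_E hXXnn
  have hN4 : N ^ 4 ≤ 16 * Q ^ 4 := by
    have := pow_le_pow_left₀ hNpos.le hn2q 4
    calc N ^ 4 ≤ (2 * Q) ^ 4 := this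
      _ = 16 * Q ^ 4 := by ring
  have t1 : m * ((k : ℝ) * C ^ 4) ≤ 2 * (N * Q ^ 2 * C ^ 4) := by
    calc m * ((k : ℝ) * C ^ 4) = (m * (k : ℝ)) * C ^ 4 := by ring
      _ ≤ Q ^ 3 * C ^ 4 := mul_le_mul_of_nonneg_right hm1 (by positivity)
      _ = Q * (Q ^ 2 * C ^ 4) := by ring
      _ ≤ (2 * N) * (Q ^ 2 * C ^ 4) := mul_le_mul_of_nonneg_right hq2n (by positivity)
      _ = 2 * (N * Q ^ 2 * C ^ 4) := by ring
  have t2 : m * (N * (Q ^ 2 * N * M) ^ 4) ≤ 16 * (N * Q ^ 2 * C ^ 4) := by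
    have key : Q ^ 2 * (m * (N * (Q ^ 2 * N * M) ^ 4))
        ≤ Q ^ 2 * (16 * (N * Q ^ 2 * C ^ 4)) := by
      calc Q ^ 2 * (m * (N * (Q ^ 2 * N * M) ^ 4))
          = (m * (Q ^ 10 * M ^ 4)) * N ^ 5 := by ring
        _ ≤ C ^ 4 * N ^ 5 := mul_le_mul_of_nonneg_right hm2 (by positivity)
        _ = N ^ 4 * (C ^ 4 * N) := by ring
        _ ≤ (16 * Q ^ 4) * (C ^ 4 * N) := mul_le_mul_of_nonneg_right hN4 (by positivity)
        _ = Q ^ 2 * (16 * (N * Q ^ 2 * C ^ 4)) := by ring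
    exact le_of_mul_le_mul_left key (by positivity)
  have t3 : m * (N * (Q ^ 2 * C) ^ 2) ≤ N * Q ^ 2 * C ^ 4 := by
    calc m * (N * (Q ^ 2 * C) ^ 2) = (m * Q ^ 2) * (N * Q ^ 2 * C ^ 2) := by ring
      _ ≤ C ^ 2 * (N * Q ^ 2 * C ^ 2) := by
          refine mul_le_mul_of_nonneg_right hm3 (by positivity)
      _ = N * Q ^ 2 * C ^ 4 := by ring
  have step2 : m * D ≤ 19 * (N * Q ^ 2 * C ^ 4) := by
    rw [hDdef, mul_add, mul_add]
    linarith
  have step3 : m * D ≤ (19 * XX) * D := by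
    calc m * D ≤ 19 * (N * Q ^ 2 * C ^ 4) := step2
      _ ≤ 19 * (XX * D) := by linarith
      _ = (19 * XX) * D := by ring
  have hm19 : m ≤ 19 * XX := le_of_mul_le_mul_right step3 hDpos
  linarith
end

section
/- Let q be an odd prime power, E ⊆ 𝔽_q², t ∈ 𝔽_q^*, and (u₀,v₀) ∈ E×E with ‖u₀−v₀‖ = t, and let X_t = { g ∈ G₀ : g⁻¹u₀ ∈ E and g⁻¹v₀ ∈ E }. Then #{(g₁,g₂,h₁,h₂) ∈ X_t⁴ : ġ₁ḣ₁ = ġ₂ḣ₂} ≤ |X_t|³·|E|. -/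
open Matrix

/-- The action of a rigid motion `g = (z, h) ∈ G₀` on a point `x ∈ F²`: `g x = z + h x`. -/
def G0.act {F : Type} [Field F] (g : G0 F) (x : Fin 2 → F) : Fin 2 → F :=
  Multiplicative.toAdd g.left + (SO2.mat g.right).mulVec x

/-- The "squared distance" `‖x - y‖ = (x₁ - y₁)² + (x₂ - y₂)²` on `F²`. -/
def sqDist {F : Type} [Field F] (x y : Fin 2 → F) : F :=
  (x 0 - y 0) ^ 2 + (x 1 - y 1) ^ 2

lemma G0.left_eq {F : Type} [Field F] (u₀ : Fin 2 → F) (g : G0 F) :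
    Multiplicative.toAdd g.left = u₀ - (SO2.mat g.right).mulVec (G0.act g⁻¹ u₀) := by
  unfold G0.act
  rw [SemidirectProduct.inv_left, SemidirectProduct.inv_right]
  simp only [rotHom, MonoidHom.coe_mk, OneHom.coe_mk, MulEquiv.coe_mk, Equiv.coe_fn_mk,
    toAdd_ofAdd, Matrix.mulVec_add, Matrix.mulVec_mulVec, SO2.mat_mul_inv, Matrix.one_mulVec,
    toAdd_inv]
  abel

lemma G0.eq_of_right_act {F : Type} [Field F] (u₀ : Fin 2 → F) {g g' : G0 F}
    (hr : g.right = g'.right) (ha : G0.act g⁻¹ u₀ = G0.act g'⁻¹ u₀) : g = g' := by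
  have hl : g.left = g'.left := by
    have := G0.left_eq u₀ g
    rw [hr, ha, ← G0.left_eq u₀ g'] at this
    exact Multiplicative.toAdd.injective this
  exact SemidirectProduct.ext hl hr

/-- The counting estimate in the proof of Theorem 1.14: for `E ⊆ 𝔽_q²`, `t ≠ 0`, and a
segment `(u₀, v₀) ∈ E × E` with `‖u₀ - v₀‖ = t`, letting
`X_t = {g ∈ G₀ : g⁻¹u₀ ∈ E, g⁻¹v₀ ∈ E}`, one has
`#{(g₁,g₂,h₁,h₂) ∈ X_t⁴ : ġ₁ḣ₁ = ġ₂ḣ₂} ≤ |X_t|³·|E|`. -/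
theorem energy_distance_G0 (F : Type) [Field F] [Fintype F] (hodd : Odd (Fintype.card F))
    (E : Set (Fin 2 → F)) (t : F) (ht : t ≠ 0) (u₀ v₀ : Fin 2 → F)
    (hu : u₀ ∈ E) (hv : v₀ ∈ E) (huv : sqDist u₀ v₀ = t) :
    (Nat.card {p : (G0 F × G0 F) × (G0 F × G0 F) //
        (p.1.1 ∈ {g : G0 F | G0.act g⁻¹ u₀ ∈ E ∧ G0.act g⁻¹ v₀ ∈ E}) ∧
        (p.1.2 ∈ {g : G0 F | G0.act g⁻¹ u₀ ∈ E ∧ G0.act g⁻¹ v₀ ∈ E}) ∧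
        (p.2.1 ∈ {g : G0 F | G0.act g⁻¹ u₀ ∈ E ∧ G0.act g⁻¹ v₀ ∈ E}) ∧
        (p.2.2 ∈ {g : G0 F | G0.act g⁻¹ u₀ ∈ E ∧ G0.act g⁻¹ v₀ ∈ E}) ∧
        p.1.1.right * p.2.1.right = p.1.2.right * p.2.2.right}) ≤
      Nat.card {g : G0 F | G0.act g⁻¹ u₀ ∈ E ∧ G0.act g⁻¹ v₀ ∈ E} ^ 3 * Nat.card E := by
  classical
  set S := {g : G0 F | G0.act g⁻¹ u₀ ∈ E ∧ G0.act g⁻¹ v₀ ∈ E} with hS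
  let f : {p : (G0 F × G0 F) × (G0 F × G0 F) //
        (p.1.1 ∈ S) ∧ (p.1.2 ∈ S) ∧ (p.2.1 ∈ S) ∧ (p.2.2 ∈ S) ∧
        p.1.1.right * p.2.1.right = p.1.2.right * p.2.2.right} →
      (S × S × S) × E := fun p =>
    ((⟨p.1.1.1, p.2.1⟩, ⟨p.1.1.2, p.2.2.1⟩, ⟨p.1.2.1, p.2.2.2.1⟩),
      ⟨G0.act p.1.2.2⁻¹ u₀, p.2.2.2.2.1.1⟩)
  have hf : Function.Injective f := by
    rintro ⟨⟨⟨g₁, g₂⟩, ⟨h₁, h₂⟩⟩, hg₁, hg₂, hh₁, hh₂, heq⟩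
      ⟨⟨⟨g₁', g₂'⟩, ⟨h₁', h₂'⟩⟩, hg₁', hg₂', hh₁', hh₂', heq'⟩ hfe
    simp only [f, Prod.mk.injEq, Subtype.mk.injEq] at hfe ⊢
    obtain ⟨⟨e1, e2, e3⟩, e4⟩ := hfe
    subst e1; subst e2; subst e3
    refine ⟨⟨rfl, rfl⟩, rfl, ?_⟩
    have hr : h₂.right = h₂'.right := by
      have : g₂.right⁻¹ * (g₁.right * h₁.right) = g₂.right⁻¹ * (g₁.right * h₁.right) := rfl
      have h1 : h₂.right = g₂.right⁻¹ * (g₁.right * h₁.right) := by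
        rw [heq]; group
      have h2 : h₂'.right = g₂.right⁻¹ * (g₁.right * h₁.right) := by
        rw [heq']; group
      rw [h1, h2]
    exact G0.eq_of_right_act u₀ hr e4
  have hfin : Finite ((S × S × S) × E) := by
    have : Finite (G0 F) := inferInstance
    exact Finite.instProd
  calc Nat.card {p : (G0 F × G0 F) × (G0 F × G0 F) //
        (p.1.1 ∈ S) ∧ (p.1.2 ∈ S) ∧ (p.2.1 ∈ S) ∧ (p.2.2 ∈ S) ∧
        p.1.1.right * p.2.1.right = p.1.2.right * p.2.2.right}
      ≤ Nat.card ((S × S × S) × E) := Nat.card_le_card_of_injective f hf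
    _ = Nat.card S ^ 3 * Nat.card E := by
        simp only [Nat.card_prod]; ring
end
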